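/- Weak duality for the information-projection problem: for every feasible pmf P on X and every λ ∈ ℝ^K, D(P‖P_syn) ≥ −f(λ) − γ‖λ‖₁, where ‖λ‖₁ = Σ_k |λ_k|. -/

import Mathlib

open Finset

noncomputable section

/-- `P` is a probability mass function on the finite set `X`. -/
def IsPMF {X : Type*} [Fintype X] (P : X → ℝ) : Prop :=
  (∀ x, 0 ≤ P x) ∧ ∑ x, P x = 1

/-- The value of query `q` under a pmf `P`. -/
def queryVal {X : Type*} [Fintype X] (P : X → ℝ) (q : X → ℝ) : ℝ :=
  ∑ x, P x * q x

/-- KL divergence between pmfs on a finite set (with the convention `0 log 0 = 0`,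
which holds automatically since `Real.log 0 = 0`). -/
def KLdiv {X : Type*} [Fintype X] (P Q : X → ℝ) : ℝ :=
  ∑ x, P x * Real.log (P x / Q x)

/-- The log-partition part of the dual objective. -/
def dualF {X : Type*} [Fintype X] {K : ℕ} (Psyn : X → ℝ) (q : Fin K → X → ℝ)
    (a : Fin K → ℝ) (lam : Fin K → ℝ) : ℝ :=
  Real.log (∑ x, Psyn x * Real.exp (-∑ k, lam k * (q k x - a k)))

/-- The partition function of the tilted distribution. -/
def Zfun {X : Type*} [Fintype X] {K : ℕ} (Psyn : X → ℝ) (q : Fin K → X → ℝ)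
    (a : Fin K → ℝ) (lam : Fin K → ℝ) : ℝ :=
  ∑ x, Psyn x * Real.exp (-∑ k, lam k * (q k x - a k))

/-- The exponentially tilted pmf `P_λ`. -/
def tilt {X : Type*} [Fintype X] {K : ℕ} (Psyn : X → ℝ) (q : Fin K → X → ℝ)
    (a : Fin K → ℝ) (lam : Fin K → ℝ) (x : X) : ℝ :=
  Psyn x * Real.exp (-∑ k, lam k * (q k x - a k)) / Zfun Psyn q a lam

/-- `P` is feasible: all query answers are within `γ` of the targets `a`. -/
def Feasible {X : Type*} [Fintype X] {K : ℕ} (q : Fin K → X → ℝ) (a : Fin K → ℝ)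
    (γ : ℝ) (P : X → ℝ) : Prop :=
  ∀ k : Fin K, |queryVal P (q k) - a k| ≤ γ

/-!
For the exponentially tilted pmf `P_λ ∝ P_syn · exp(-Σ_k λ_k (q_k - a_k))`, the log-ratio
`log (P / P_λ)` equals `log (P / P_syn) + Σ_k λ_k (q_k - a_k) + f(λ)`. Averaging over `P` gives
`0 ≤ D(P‖P_λ) = D(P‖P_syn) + Σ_k λ_k (q_k(P) - a_k) + f(λ)`, and for feasible `P` the middle
term is at most `γ ‖λ‖₁`.
-/

lemma sub_le_mul_log_div {p q : ℝ} (hp : 0 ≤ p) (hq : 0 < q) : p - q ≤ p * Real.log (p / q) := by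
  have h := mul_le_mul_of_nonneg_left (Real.self_sub_one_le_mul_log (div_nonneg hp hq.le)) hq.le
  rwa [mul_sub, mul_one, ← mul_assoc, mul_div_cancel₀ _ hq.ne'] at h

lemma KLdiv_nonneg {X : Type*} [Fintype X] {P Q : X → ℝ} (hP : ∀ x, 0 ≤ P x)
    (hQ : ∀ x, 0 < Q x) (hsum : ∑ x, Q x ≤ ∑ x, P x) : 0 ≤ KLdiv P Q :=
  calc 0 ≤ ∑ x, (P x - Q x) := by rw [sum_sub_distrib]; linarith
    _ ≤ KLdiv P Q := sum_le_sum fun x _ => sub_le_mul_log_div (hP x) (hQ x)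

section Tilt

variable {X : Type*} [Fintype X] {K : ℕ} {Psyn : X → ℝ} (q : Fin K → X → ℝ) (a : Fin K → ℝ)
  (lam : Fin K → ℝ)

lemma Zfun_pos [Nonempty X] (hpos : ∀ x, 0 < Psyn x) : 0 < Zfun Psyn q a lam :=
  sum_pos (fun x _ => mul_pos (hpos x) (Real.exp_pos _)) univ_nonempty

lemma tilt_pos [Nonempty X] (hpos : ∀ x, 0 < Psyn x) (x : X) : 0 < tilt Psyn q a lam x :=
  div_pos (mul_pos (hpos x) (Real.exp_pos _)) (Zfun_pos q a lam hpos)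

lemma sum_tilt [Nonempty X] (hpos : ∀ x, 0 < Psyn x) : ∑ x, tilt Psyn q a lam x = 1 := by
  simp only [tilt]
  rw [← sum_div]
  exact div_self (Zfun_pos q a lam hpos).ne'

lemma sum_mul_sum_lam_mul_sub_eq {P : X → ℝ} (hP1 : ∑ x, P x = 1) :
    ∑ x, P x * ∑ k, lam k * (q k x - a k) = ∑ k, lam k * (queryVal P (q k) - a k) := by
  simp only [mul_sum, queryVal]
  rw [sum_comm]
  refine sum_congr rfl fun k _ => ?_
  calc ∑ x, P x * (lam k * (q k x - a k)) = lam k * (∑ x, P x * q k x - (∑ x, P x) * a k) := by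
        rw [sum_mul, ← sum_sub_distrib, mul_sum]
        exact sum_congr rfl fun x _ => by ring
    _ = lam k * (∑ x, P x * q k x - a k) := by rw [hP1, one_mul]

lemma log_div_tilt [Nonempty X] (hpos : ∀ x, 0 < Psyn x) {p : ℝ} (hp : 0 < p) (x : X) :
    Real.log (p / tilt Psyn q a lam x) =
      Real.log (p / Psyn x) + ∑ k, lam k * (q k x - a k) + Real.log (Zfun Psyn q a lam) := by
  have hZ := Zfun_pos q a lam hpos
  have hsplit : p / tilt Psyn q a lam x =
      p / Psyn x * Real.exp (∑ k, lam k * (q k x - a k)) * Zfun Psyn q a lam := by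
    rw [tilt, Real.exp_neg]
    field_simp
  rw [hsplit, Real.log_mul (mul_pos (div_pos hp (hpos x)) (Real.exp_pos _)).ne' hZ.ne',
    Real.log_mul (div_pos hp (hpos x)).ne' (Real.exp_ne_zero _), Real.log_exp]

lemma KLdiv_tilt [Nonempty X] (hpos : ∀ x, 0 < Psyn x) {P : X → ℝ} (hP : IsPMF P) :
    KLdiv P (tilt Psyn q a lam) = KLdiv P Psyn + ∑ k, lam k * (queryVal P (q k) - a k) +
      Real.log (Zfun Psyn q a lam) := by
  have hterm : ∀ x, P x * Real.log (P x / tilt Psyn q a lam x) = P x * Real.log (P x / Psyn x) +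
      P x * ∑ k, lam k * (q k x - a k) + P x * Real.log (Zfun Psyn q a lam) := by
    intro x
    rcases (hP.1 x).eq_or_lt with h0 | hlt
    · simp [← h0]
    · rw [log_div_tilt q a lam hpos hlt]
      ring
  rw [KLdiv, sum_congr rfl fun x _ => hterm x, sum_add_distrib, sum_add_distrib, ← sum_mul,
    hP.2, one_mul, sum_mul_sum_lam_mul_sub_eq q a lam hP.2, KLdiv]

end Tilt

lemma Feasible.sum_lam_mul_le {X : Type*} [Fintype X] {K : ℕ} {q : Fin K → X → ℝ}
    {a : Fin K → ℝ} {γ : ℝ} {P : X → ℝ} (hfeas : Feasible q a γ P) (lam : Fin K → ℝ) :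
    ∑ k, lam k * (queryVal P (q k) - a k) ≤ γ * ∑ k, |lam k| := by
  rw [mul_sum]
  refine sum_le_sum fun k _ => ?_
  calc lam k * (queryVal P (q k) - a k) ≤ |lam k| * |queryVal P (q k) - a k| := by
        rw [← abs_mul]; exact le_abs_self _
    _ ≤ γ * |lam k| := by rw [mul_comm γ]; exact mul_le_mul_of_nonneg_left (hfeas k) (abs_nonneg _)

theorem weak_duality_general
    {X : Type*} [Fintype X] [Nonempty X] {K : ℕ}
    (Psyn : X → ℝ) (hpos : ∀ x, 0 < Psyn x)
    (q : Fin K → X → ℝ) (a : Fin K → ℝ) (γ : ℝ)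
    (P : X → ℝ) (hP : IsPMF P) (hfeas : Feasible q a γ P)
    (lam : Fin K → ℝ) :
    KLdiv P Psyn ≥ -dualF Psyn q a lam - γ * ∑ k, |lam k| := by
  have hKL := KLdiv_nonneg hP.1 (tilt_pos q a lam hpos) (by rw [sum_tilt q a lam hpos, hP.2])
  rw [KLdiv_tilt q a lam hpos hP] at hKL
  have hdual : dualF Psyn q a lam = Real.log (Zfun Psyn q a lam) := rfl
  linarith [hfeas.sum_lam_mul_le lam]

/-- Weak duality: for every feasible pmf `P` and every `λ`,
`D(P‖P_syn) ≥ −f(λ) − γ‖λ‖₁`. -/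
theorem weak_duality
    {X : Type*} [Fintype X] [Nonempty X] {K : ℕ}
    (Psyn : X → ℝ) (hPsyn : IsPMF Psyn) (hpos : ∀ x, 0 < Psyn x)
    (q : Fin K → X → ℝ) (a : Fin K → ℝ) (γ : ℝ) (hγ : 0 ≤ γ)
    (P : X → ℝ) (hP : IsPMF P) (hfeas : Feasible q a γ P)
    (lam : Fin K → ℝ) :
    KLdiv P Psyn ≥ -dualF Psyn q a lam - γ * ∑ k, |lam k| :=
  weak_duality_general Psyn hpos q a γ P hP hfeas lam
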